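/- arXiv:2305.07088 — 3 statements merged into one kernel-verified Lean document; each statement's English description precedes it below -/
import Mathlib

section
/- Fix ρ₀ ≥ 0. The function z_{ρ₀} : ℝ → ℝ, z_{ρ₀}(y) = (Φ')₊⁻¹(y + Φ'(ρ₀)) − ρ₀, is continuously differentiable on ℝ, with z_{ρ₀}'(y) = 1/Φ''(z_{ρ₀}(y) + ρ₀) for y > −Φ'(ρ₀) and z_{ρ₀}'(y) = 0 for y ≤ −Φ'(ρ₀); in particular lim_{y→(−Φ'(ρ₀))⁺} z_{ρ₀}'(y) = 0. -/
open MeasureTheory Filter Set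

/-- Enthalpy derivative `Φ'(ρ) = ∫₀^ρ P'(s)/s ds`. -/
noncomputable def PhiD (P' : ℝ → ℝ) (ρ : ℝ) : ℝ := ∫ s in Set.Ioc (0:ℝ) ρ, P' s / s

open scoped Topology

/-!
By (P2) with `1 < γ₀`, the integrand `Φ'' = P'(s)/s ~ K₀ s^(γ₀-2)` is integrable at `0`, so `Φ'` is
a strictly increasing bijection of `[0, ∞)` fixing `0`, with derivative `Φ''` on `(0, ∞)`. Its
extended inverse is therefore continuous and, by the inverse function theorem, has derivative
`1/Φ''(x) = x / P'(x)` at `y = Φ'(x) > 0`. Since `γ₀ < 2`, `Φ''` blows up at `0`, so `x / P'(x) → 0`: the function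
`y ↦ (Φ')₊⁻¹(y) / P'((Φ')₊⁻¹(y))` is continuous on `ℝ` (it vanishes for `y ≤ 0` since `0 / a = 0`),
and a derivative that extends continuously across a point is the derivative there as well.
Finally `z_{ρ₀}` is a translate of `(Φ')₊⁻¹`.
-/

def IsExtendedInverse (Φ g : ℝ → ℝ) : Prop :=
  (∀ y ≤ 0, g y = 0) ∧ ∀ y, 0 ≤ y → 0 ≤ g y ∧ Φ (g y) = y

namespace IsExtendedInverse

variable {Φ g : ℝ → ℝ}

lemma nonneg (hg : IsExtendedInverse Φ g) (y : ℝ) : 0 ≤ g y := by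
  rcases le_or_gt y 0 with hy | hy
  · exact (hg.1 y hy).ge
  · exact (hg.2 y hy.le).1

lemma pos (hg : IsExtendedInverse Φ g) (hΦ0 : Φ 0 = 0) {y : ℝ} (hy : 0 < y) : 0 < g y := by
  refine (hg.nonneg y).lt_of_ne fun h => hy.ne ?_
  rw [← (hg.2 y hy.le).2, ← h, hΦ0]

lemma monotone (hg : IsExtendedInverse Φ g) (hΦ : StrictMonoOn Φ (Ici 0)) : Monotone g := by
  intro a b hab
  rcases le_or_gt a 0 with ha | ha
  · exact (hg.1 a ha).trans_le (hg.nonneg b)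
  have hb : 0 ≤ b := ha.le.trans hab
  rw [← hΦ.le_iff_le (hg.nonneg a) (hg.nonneg b), (hg.2 a ha.le).2, (hg.2 b hb).2]
  exact hab

variable (hΦ : StrictMonoOn Φ (Ici 0)) (hΦ0 : Φ 0 = 0)
include hΦ hΦ0

lemma apply_nonneg {x : ℝ} (hx : 0 ≤ x) : 0 ≤ Φ x :=
  hΦ0 ▸ hΦ.monotoneOn self_mem_Ici hx hx

lemma leftInvOn (hg : IsExtendedInverse Φ g) : LeftInvOn g Φ (Ici 0) := fun x hx =>
  have hΦx := hg.2 (Φ x) (apply_nonneg hΦ hΦ0 hx)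
  hΦ.injOn hΦx.1 hx hΦx.2

lemma continuous (hg : IsExtendedInverse Φ g) : Continuous g := by
  -- Adding `min y 0` keeps `g` monotone and makes it surjective onto `ℝ`.
  have hsurj : Function.Surjective fun y => g y + min y 0 := by
    intro x
    rcases le_or_gt x 0 with hx | hx
    · exact ⟨x, by simp [hg.1 x hx, hx]⟩
    · refine ⟨Φ x, ?_⟩
      simp [hg.leftInvOn hΦ hΦ0 hx.le, apply_nonneg hΦ hΦ0 hx.le]
  have hmono : Monotone fun y => g y + min y 0 :=
    (hg.monotone hΦ).add (monotone_id.min monotone_const)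
  have h := (hmono.continuous_of_surjective hsurj).sub
    (continuous_id.min (continuous_const (y := 0)))
  exact h.congr fun y => add_sub_cancel_right (g y) (min y 0)

lemma hasDerivAt_of_pos (hg : IsExtendedInverse Φ g) {y φ : ℝ} (hy : 0 < y)
    (hΦ' : HasDerivAt Φ φ (g y)) (hφ : φ ≠ 0) : HasDerivAt g φ⁻¹ y := by
  refine hΦ'.of_local_left_inverse (hg.continuous hΦ hΦ0).continuousAt hφ ?_
  filter_upwards [Ioi_mem_nhds hy] with y' hy' using (hg.2 y' (le_of_lt hy')).2

end IsExtendedInverse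

lemma div_eq_rpow_mul_mul_rpow {s : ℝ} (hs : 0 < s) (a γ : ℝ) :
    a / s = s ^ (1 - γ) * a * s ^ (γ - 2) := by
  rw [mul_right_comm, ← Real.rpow_add hs, show 1 - γ + (γ - 2) = -1 by ring,
    Real.rpow_neg_one, div_eq_mul_inv, mul_comm]

section Enthalpy

variable {P' : ℝ → ℝ} {γ K : ℝ}

lemma tendsto_div_self_atTop_of_tendsto_rpow_mul (hγ : γ < 2) (hK : 0 < K)
    (hlim : Tendsto (fun s => s ^ (1 - γ) * P' s) (𝓝[>] 0) (𝓝 K)) :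
    Tendsto (fun s => P' s / s) (𝓝[>] 0) atTop := by
  have h := hlim.pos_mul_atTop hK (tendsto_rpow_neg_nhdsGT_zero (by linarith : γ - 2 < 0))
  refine h.congr' ?_
  filter_upwards [self_mem_nhdsWithin] with s hs
  exact (div_eq_rpow_mul_mul_rpow hs (P' s) γ).symm

lemma integrableOn_div_self_Ioc_of_tendsto_rpow_mul (hP'cont : ContinuousOn P' (Ioi 0))
    (hγ : 1 < γ) (hlim : Tendsto (fun s => s ^ (1 - γ) * P' s) (𝓝[>] 0) (𝓝 K)) (ρ : ℝ) :
    IntegrableOn (fun s => P' s / s) (Ioc 0 ρ) := by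
  have hcont : ContinuousOn (fun s => P' s / s) (Ioi 0) :=
    hP'cont.div continuousOn_id fun s hs => hs.ne'
  obtain ⟨δ, hδ, hbound⟩ := mem_nhdsGT_iff_exists_Ioc_subset.1 <|
    hlim.norm.eventually (eventually_lt_nhds (lt_add_one ‖K‖))
  have hnear : IntegrableOn (fun s => P' s / s) (Ioc 0 δ) := by
    have hdom : IntegrableOn (fun s : ℝ => (‖K‖ + 1) * s ^ (γ - 2)) (Ioc 0 δ) :=
      ((intervalIntegrable_iff_integrableOn_Ioc_of_le (le_of_lt hδ)).1
        (intervalIntegral.intervalIntegrable_rpow' (by linarith))).const_mul _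
    refine hdom.mono' ((hcont.mono Ioc_subset_Ioi_self).aestronglyMeasurable measurableSet_Ioc) ?_
    refine (ae_restrict_iff' measurableSet_Ioc).2 (Eventually.of_forall fun s hs => ?_)
    have hs0 : 0 < s := hs.1
    rw [div_eq_rpow_mul_mul_rpow hs0 (P' s) γ, norm_mul,
      Real.norm_of_nonneg (Real.rpow_nonneg hs0.le _)]
    exact mul_le_mul_of_nonneg_right (hbound hs).le (Real.rpow_nonneg hs0.le _)
  have hfar : IntegrableOn (fun s => P' s / s) (Ioc δ ρ) :=
    ((hcont.mono fun s hs => lt_of_lt_of_le hδ hs.1).integrableOn_Icc).mono_set Ioc_subset_Icc_self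
  exact (hnear.union hfar).mono_set Ioc_subset_Ioc_union_Ioc

@[simp]
lemma PhiD_zero : PhiD P' 0 = 0 := by
  simp [PhiD]

lemma PhiD_eq_intervalIntegral {x : ℝ} (hx : 0 ≤ x) :
    PhiD P' x = ∫ s in 0..x, P' s / s :=
  (intervalIntegral.integral_of_le hx).symm

variable (hint : ∀ ρ, IntegrableOn (fun s => P' s / s) (Ioc 0 ρ))
include hint

lemma intervalIntegrable_div_self {a b : ℝ} (ha : 0 ≤ a) (hab : a ≤ b) :
    IntervalIntegrable (fun s => P' s / s) volume a b :=
  (intervalIntegrable_iff_integrableOn_Ioc_of_le hab).2 <|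
    (hint b).mono_set (Ioc_subset_Ioc_left ha)

lemma strictMonoOn_PhiD (hP'pos : ∀ s, 0 < s → 0 < P' s) : StrictMonoOn (PhiD P') (Ici 0) := by
  intro a ha b hb hab
  have hpos : 0 < ∫ s in a..b, P' s / s :=
    intervalIntegral.intervalIntegral_pos_of_pos_on
      (intervalIntegrable_div_self hint ha hab.le)
      (fun s hs => have hs0 : 0 < s := lt_of_le_of_lt ha hs.1; div_pos (hP'pos s hs0) hs0) hab
  rw [PhiD_eq_intervalIntegral ha, PhiD_eq_intervalIntegral hb,
    ← intervalIntegral.integral_add_adjacent_intervals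
      (intervalIntegrable_div_self hint le_rfl ha) (intervalIntegrable_div_self hint ha hab.le)]
  linarith

lemma hasDerivAt_PhiD (hP'cont : ContinuousOn P' (Ioi 0)) {x : ℝ} (hx : 0 < x) :
    HasDerivAt (PhiD P') (P' x / x) x := by
  have hcont : ContinuousOn (fun s => P' s / s) (Ioi 0) :=
    hP'cont.div continuousOn_id fun s hs => hs.ne'
  have h := intervalIntegral.integral_hasDerivAt_right
    (intervalIntegrable_div_self hint le_rfl hx.le)
    (hcont.stronglyMeasurableAtFilter isOpen_Ioi x hx) (hcont.continuousAt (Ioi_mem_nhds hx))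
  refine h.congr_of_eventuallyEq ?_
  filter_upwards [Ioi_mem_nhds hx] with y hy using PhiD_eq_intervalIntegral (le_of_lt hy)

end Enthalpy

lemma continuousOn_self_div_Ici {P' : ℝ → ℝ} (hP'cont : ContinuousOn P' (Ioi 0))
    (hP'pos : ∀ s, 0 < s → 0 < P' s) (hblow : Tendsto (fun s => P' s / s) (𝓝[>] 0) atTop) :
    ContinuousOn (fun x => x / P' x) (Ici 0) := by
  intro x hx
  rcases (mem_Ici.1 hx).eq_or_lt with rfl | hx
  · rw [← continuousWithinAt_Ioi_iff_Ici, ContinuousWithinAt, zero_div]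
    exact hblow.inv_tendsto_atTop.congr fun x => inv_div (P' x) x
  · exact (continuousAt_id.div (hP'cont.continuousAt (Ioi_mem_nhds hx))
      (hP'pos x hx).ne').continuousWithinAt

lemma IsExtendedInverse.hasDerivAt_of_PhiD {P' g : ℝ → ℝ}
    (hg : IsExtendedInverse (PhiD P') g)
    (hP'cont : ContinuousOn P' (Ioi 0)) (hP'pos : ∀ s, 0 < s → 0 < P' s)
    (hint : ∀ ρ, IntegrableOn (fun s => P' s / s) (Ioc 0 ρ))
    (hblow : Tendsto (fun s => P' s / s) (𝓝[>] 0) atTop) (y : ℝ) :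
    HasDerivAt g (g y / P' (g y)) y := by
  have hΦ := strictMonoOn_PhiD hint hP'pos
  have hgcont := hg.continuous hΦ PhiD_zero
  have hderiv_ne : ∀ y ≠ 0, HasDerivAt g (g y / P' (g y)) y := by
    intro y hy
    rcases hy.lt_or_gt with hy | hy
    · rw [hg.1 y hy.le, zero_div]
      refine (hasDerivAt_const y 0).congr_of_eventuallyEq ?_
      filter_upwards [Iio_mem_nhds hy] with y' hy' using hg.1 y' (le_of_lt hy')
    · have hgy := hg.pos PhiD_zero hy
      have h := hg.hasDerivAt_of_pos hΦ PhiD_zero hy (hasDerivAt_PhiD hint hP'cont hgy)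
        (div_pos (hP'pos _ hgy) hgy).ne'
      rwa [inv_div] at h
  rcases eq_or_ne y 0 with rfl | hy
  · exact hasDerivAt_of_hasDerivAt_of_ne hderiv_ne hgcont.continuousAt
      ((continuousOn_self_div_Ici hP'cont hP'pos hblow).comp_continuous hgcont
        hg.nonneg).continuousAt
  · exact hderiv_ne y hy

theorem stmt1_general (P' : ℝ → ℝ)
    (hP'cont : ContinuousOn P' (Set.Ioi 0))
    (hP'pos : ∀ s, 0 < s → 0 < P' s)
    (γ₀ K₀ : ℝ) (hγ₀ : γ₀ ∈ Set.Ioo (6/5 : ℝ) 2) (hK₀ : 0 < K₀)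
    (hlim₀ : Filter.Tendsto (fun s => s ^ (1 - γ₀) * P' s) (nhdsWithin 0 (Set.Ioi 0)) (nhds K₀))
    -- `invPhi` is the extended inverse `(Φ')₊⁻¹ : ℝ → [0,∞)`, vanishing on `(-∞,0]`
    (invPhi : ℝ → ℝ)
    (hinv0 : ∀ y ≤ (0:ℝ), invPhi y = 0)
    (hinv : ∀ y, 0 ≤ y → 0 ≤ invPhi y ∧ PhiD P' (invPhi y) = y)
    (ρ₀ : ℝ) :
    -- `z_{ρ₀}(y) = (Φ')₊⁻¹(y + Φ'(ρ₀)) - ρ₀` is C¹ on ℝ, with the stated derivative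
    ∃ z' : ℝ → ℝ, Continuous z' ∧
      (∀ y : ℝ, HasDerivAt (fun y => invPhi (y + PhiD P' ρ₀) - ρ₀) (z' y) y) ∧
      (∀ y : ℝ, -(PhiD P' ρ₀) < y →
        z' y = 1 / (P' (invPhi (y + PhiD P' ρ₀)) / invPhi (y + PhiD P' ρ₀))) ∧
      (∀ y : ℝ, y ≤ -(PhiD P' ρ₀) → z' y = 0) ∧
      Filter.Tendsto z' (nhdsWithin (-(PhiD P' ρ₀)) (Set.Ioi (-(PhiD P' ρ₀)))) (nhds 0) := by
  have hg : IsExtendedInverse (PhiD P') invPhi := ⟨hinv0, hinv⟩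
  have hint :=
    integrableOn_div_self_Ioc_of_tendsto_rpow_mul hP'cont (by linarith [hγ₀.1]) hlim₀
  have hblow := tendsto_div_self_atTop_of_tendsto_rpow_mul hγ₀.2 hK₀ hlim₀
  set c := PhiD P' ρ₀
  set z' := fun y => invPhi (y + c) / P' (invPhi (y + c)) with hz'
  have hz'cont : Continuous z' :=
    (continuousOn_self_div_Ici hP'cont hP'pos hblow).comp_continuous
      ((hg.continuous (strictMonoOn_PhiD hint hP'pos) PhiD_zero).comp (continuous_add_const c))
      fun y => hg.nonneg _
  have hz'_eq_zero : ∀ y ≤ -c, z' y = 0 := fun y hy => by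
    simp [hz', hinv0 (y + c) (by linarith)]
  refine ⟨z', hz'cont, fun y => ?_, fun y _ => by rw [hz', one_div, inv_div], hz'_eq_zero, ?_⟩
  · exact ((hg.hasDerivAt_of_PhiD hP'cont hP'pos hint hblow (y + c)).comp_add_const y c).sub_const
      ρ₀
  · simpa [hz'_eq_zero (-c) le_rfl] using (hz'cont.tendsto (-c)).mono_left nhdsWithin_le_nhds

theorem stmt1 (P P' : ℝ → ℝ)
    (hP : ∀ s, 0 < s → HasDerivAt P (P' s) s)
    (hP'cont : ContinuousOn P' (Set.Ioi 0))
    (hP'pos : ∀ s, 0 < s → 0 < P' s)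
    (γ₀ K₀ : ℝ) (hγ₀ : γ₀ ∈ Set.Ioo (6/5 : ℝ) 2) (hK₀ : 0 < K₀)
    (hlim₀ : Filter.Tendsto (fun s => s ^ (1 - γ₀) * P' s) (nhdsWithin 0 (Set.Ioi 0)) (nhds K₀))
    (γ₁ K₁ : ℝ) (hγ₁ : γ₁ ∈ Set.Ioo (6/5 : ℝ) 2) (hK₁ : 0 < K₁)
    (hlim₁ : Filter.Tendsto (fun s => s ^ (1 - γ₁) * P' s) Filter.atTop (nhds K₁))
    -- `invPhi` is the extended inverse `(Φ')₊⁻¹ : ℝ → [0,∞)`, vanishing on `(-∞,0]`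
    (invPhi : ℝ → ℝ)
    (hinv0 : ∀ y ≤ (0:ℝ), invPhi y = 0)
    (hinv : ∀ y, 0 ≤ y → 0 ≤ invPhi y ∧ PhiD P' (invPhi y) = y)
    (ρ₀ : ℝ) (hρ₀ : 0 ≤ ρ₀) :
    -- `z_{ρ₀}(y) = (Φ')₊⁻¹(y + Φ'(ρ₀)) - ρ₀` is C¹ on ℝ, with the stated derivative
    ∃ z' : ℝ → ℝ, Continuous z' ∧
      (∀ y : ℝ, HasDerivAt (fun y => invPhi (y + PhiD P' ρ₀) - ρ₀) (z' y) y) ∧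
      (∀ y : ℝ, -(PhiD P' ρ₀) < y →
        z' y = 1 / (P' (invPhi (y + PhiD P' ρ₀)) / invPhi (y + PhiD P' ρ₀))) ∧
      (∀ y : ℝ, y ≤ -(PhiD P' ρ₀) → z' y = 0) ∧
      Filter.Tendsto z' (nhdsWithin (-(PhiD P' ρ₀)) (Set.Ioi (-(PhiD P' ρ₀)))) (nhds 0) :=
  stmt1_general P' hP'cont hP'pos γ₀ K₀ hγ₀ hK₀ hlim₀ invPhi hinv0 hinv ρ₀
end

section
/- Fix ρ₀ ≥ 0. The Legendre transform Ψ*_{ρ₀} is continuously differentiable on ℝ, with (Ψ*_{ρ₀})'(y) = −z_{ρ₀}(y) = −(Φ')₊⁻¹(y + Φ'(ρ₀)) + ρ₀ for all y ∈ ℝ. -/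
/-!
Writing `Y = y + Φ'(ρ₀)`, the derivative `Φ'(τ + ρ₀) - Y` of `τ ↦ H_{ρ₀,y}(τ)` is nonpositive on
`(-ρ₀, z_{ρ₀}(y))` and nonnegative beyond, because `Φ'` is strictly increasing on `[0, ∞)` and
`(Φ')₊⁻¹` inverts it there (for `Y ≤ 0` the first interval is empty). So the infimum defining
`Ψ*_{ρ₀}(y)` is attained at `z_{ρ₀}(y)`, and since `H_{ρ₀,w}(τ) = H_{ρ₀,y}(τ) - (w - y) τ`,
`Ψ*_{ρ₀}(w) ≤ Ψ*_{ρ₀}(y) - (w - y) z_{ρ₀}(y)` for all `y, w`. A function admitting such a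
continuous family `-z_{ρ₀}` of supergradients is differentiable with derivative `-z_{ρ₀}`.
Continuity of `z_{ρ₀}` comes from monotonicity of `(Φ')₊⁻¹`; (P2) with `γ₀ > 1` makes `P'(s)/s`
integrable at `0`, so that `Φ'` is a genuine continuous primitive and `Φ` is `C¹`.
-/

open MeasureTheory Filter Set

/-- Enthalpy `Φ(ρ) = ∫₀^ρ Φ'(σ) dσ`. -/
noncomputable def Phi (P' : ℝ → ℝ) (ρ : ℝ) : ℝ := ∫ σ in Set.Ioc (0:ℝ) ρ, PhiD P' σ

/-- `H_{ρ₀,y}(τ) = Ψ_{ρ₀}(τ) - y τ` where `Ψ_{ρ₀}(τ) = Φ(τ+ρ₀) - Φ(ρ₀) - Φ'(ρ₀) τ`. -/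
noncomputable def Hfun (P' : ℝ → ℝ) (ρ₀ y τ : ℝ) : ℝ :=
  (Phi P' (τ + ρ₀) - Phi P' ρ₀ - PhiD P' ρ₀ * τ) - y * τ

/-- Legendre transform `Ψ*_{ρ₀}(y) = inf_{τ ≥ -ρ₀} H_{ρ₀,y}(τ)`. -/
noncomputable def PsiStar (P' : ℝ → ℝ) (ρ₀ y : ℝ) : ℝ :=
  sInf (Hfun P' ρ₀ y '' Set.Ici (-ρ₀))

open Topology Asymptotics

theorem integrableOn_div_Ioc_zero_of_tendsto {f : ℝ → ℝ} {γ K : ℝ} (hf : ContinuousOn f (Ioi 0))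
    (hγ : 1 < γ) (hlim : Tendsto (fun s => s ^ (1 - γ) * f s) (𝓝[>] 0) (𝓝 K)) (ρ : ℝ) :
    IntegrableOn (fun s => f s / s) (Ioc 0 ρ) := by
  obtain ⟨δ, hδ, hbound⟩ := mem_nhdsGT_iff_exists_Ioo_subset.1
    (hlim.norm.eventually_lt_const (lt_add_one ‖K‖))
  have hm : (0 : ℝ) < δ / 2 := half_pos hδ
  have hdiv_cont : ContinuousOn (fun s => f s / s) (Ioi 0) :=
    hf.div continuousOn_id fun s hs => ne_of_gt hs
  have hnear : IntegrableOn (fun s => f s / s) (Ioc 0 (δ / 2)) := by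
    have hdom : IntegrableOn (fun s : ℝ => (‖K‖ + 1) * s ^ (γ - 2)) (Ioc 0 (δ / 2)) :=
      ((intervalIntegrable_iff_integrableOn_Ioc_of_le hm.le).1
        (intervalIntegral.intervalIntegrable_rpow' (by linarith))).const_mul _
    refine hdom.mono' ((hdiv_cont.mono fun s hs => hs.1).aestronglyMeasurable measurableSet_Ioc) ?_
    refine (ae_restrict_iff' measurableSet_Ioc).2 (Eventually.of_forall fun s hs => ?_)
    have hs0 : 0 < s := hs.1
    calc ‖f s / s‖ = s ^ (γ - 2) * ‖s ^ (1 - γ) * f s‖ := by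
          rw [norm_mul, norm_div, Real.norm_of_nonneg (Real.rpow_nonneg hs0.le _),
            Real.norm_of_nonneg hs0.le, ← mul_assoc, ← Real.rpow_add hs0,
            show γ - 2 + (1 - γ) = -1 by ring, Real.rpow_neg_one, div_eq_inv_mul]
      _ ≤ s ^ (γ - 2) * (‖K‖ + 1) :=
          mul_le_mul_of_nonneg_left (hbound ⟨hs0, hs.2.trans_lt (half_lt_self hδ)⟩).le
            (Real.rpow_nonneg hs0.le _)
      _ = (‖K‖ + 1) * s ^ (γ - 2) := mul_comm _ _
  have hfar : IntegrableOn (fun s => f s / s) (Icc (δ / 2) ρ) :=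
    (hdiv_cont.mono fun s hs => hm.trans_le hs.1).integrableOn_Icc
  exact (hnear.union hfar).mono_set fun s hs =>
    (le_total s (δ / 2)).imp (fun h => ⟨hs.1, h⟩) fun h => ⟨h, hs.2⟩

theorem setIntegral_Ioc_zero_eq_intervalIntegral {g : ℝ → ℝ} (hg : ∀ x ≤ 0, g x = 0) (ρ : ℝ) :
    ∫ x in Ioc 0 ρ, g x = ∫ x in (0 : ℝ)..ρ, g x := by
  rcases le_total 0 ρ with hρ | hρ
  · rw [intervalIntegral.integral_of_le hρ]
  · rw [Ioc_eq_empty (not_lt.2 hρ), Measure.restrict_empty, integral_zero_measure,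
      intervalIntegral.integral_of_ge hρ,
      setIntegral_eq_zero_of_forall_eq_zero fun x hx => hg x hx.2, neg_zero]

section Enthalpy

variable {f : ℝ → ℝ}

theorem PhiD_of_nonpos {ρ : ℝ} (hρ : ρ ≤ 0) : PhiD f ρ = 0 := by
  rw [PhiD, Ioc_eq_empty (not_lt.2 hρ), Measure.restrict_empty, integral_zero_measure]

theorem PhiD_eq_intervalIntegral_s2 (ρ : ℝ) :
    PhiD f ρ = ∫ s in (0 : ℝ)..ρ, (Ioi 0).indicator (fun s => f s / s) s := by
  rw [← setIntegral_Ioc_zero_eq_intervalIntegral (g := (Ioi 0).indicator fun s => f s / s)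
    (fun x hx => indicator_of_notMem (not_lt.2 hx) _), PhiD]
  exact setIntegral_congr_fun measurableSet_Ioc fun s hs => (indicator_of_mem hs.1 _).symm

theorem intervalIntegrable_indicator_div
    (hint : ∀ ρ, IntegrableOn (fun s => f s / s) (Ioc 0 ρ)) (a b : ℝ) :
    IntervalIntegrable ((Ioi 0).indicator fun s => f s / s) volume a b := by
  have hIoc : ∀ a b : ℝ, IntegrableOn ((Ioi 0).indicator fun s => f s / s) (Ioc a b) :=
    fun a b => (integrable_indicator_iff measurableSet_Ioi).2 <| by
      rw [IntegrableOn, Measure.restrict_restrict measurableSet_Ioi]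
      exact (hint b).mono_set fun x hx => ⟨hx.1, hx.2.2⟩
  exact ⟨hIoc a b, hIoc b a⟩

theorem continuous_PhiD (hint : ∀ ρ, IntegrableOn (fun s => f s / s) (Ioc 0 ρ)) :
    Continuous (PhiD f) := by
  simpa only [← funext PhiD_eq_intervalIntegral_s2] using
    intervalIntegral.continuous_primitive (intervalIntegrable_indicator_div hint) 0

theorem strictMonoOn_PhiD_s2 (hint : ∀ ρ, IntegrableOn (fun s => f s / s) (Ioc 0 ρ))
    (hpos : ∀ s, 0 < s → 0 < f s) : StrictMonoOn (PhiD f) (Ici 0) := by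
  intro a ha b _ hab
  have hI := intervalIntegrable_indicator_div hint
  rw [PhiD_eq_intervalIntegral_s2, PhiD_eq_intervalIntegral_s2, ← sub_pos,
    intervalIntegral.integral_interval_sub_left (hI 0 b) (hI 0 a)]
  refine intervalIntegral.intervalIntegral_pos_of_pos_on (hI a b) (fun x hx => ?_) hab
  have hx0 : 0 < x := lt_of_le_of_lt ha hx.1
  rw [indicator_of_mem (mem_Ioi.2 hx0)]
  exact div_pos (hpos x hx0) hx0

theorem hasDerivAt_Phi (hint : ∀ ρ, IntegrableOn (fun s => f s / s) (Ioc 0 ρ)) (ρ : ℝ) :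
    HasDerivAt (Phi f) (PhiD f ρ) ρ := by
  have hPhi : Phi f = fun ρ => ∫ x in (0 : ℝ)..ρ, PhiD f x :=
    funext (setIntegral_Ioc_zero_eq_intervalIntegral fun _ => PhiD_of_nonpos)
  rw [hPhi]
  exact ((continuous_PhiD hint).integral_hasStrictDerivAt 0 ρ).hasDerivAt

theorem hasDerivAt_Hfun (hint : ∀ ρ, IntegrableOn (fun s => f s / s) (Ioc 0 ρ)) (ρ₀ y τ : ℝ) :
    HasDerivAt (Hfun f ρ₀ y) (PhiD f (τ + ρ₀) - PhiD f ρ₀ - y) τ := by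
  have hshift := (hasDerivAt_Phi hint (τ + ρ₀)).comp_add_const τ ρ₀
  have h := ((hshift.sub_const (Phi f ρ₀)).sub ((hasDerivAt_id' τ).const_mul (PhiD f ρ₀))).sub
    ((hasDerivAt_id' τ).const_mul y)
  rw [mul_one, mul_one] at h
  exact h

end Enthalpy

section ExtendedInverse

variable {g inv : ℝ → ℝ}

theorem extendedInverse_nonneg (hinv0 : ∀ y ≤ 0, inv y = 0)
    (hinv : ∀ y, 0 ≤ y → 0 ≤ inv y ∧ g (inv y) = y) (y : ℝ) : 0 ≤ inv y := by
  rcases le_total y 0 with hy | hy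
  · exact (hinv0 y hy).ge
  · exact (hinv y hy).1

theorem le_of_le_extendedInverse (hg : StrictMonoOn g (Ici 0)) (hinv0 : ∀ y ≤ 0, inv y = 0)
    (hinv : ∀ y, 0 ≤ y → 0 ≤ inv y ∧ g (inv y) = y) {x y : ℝ} (hx : 0 < x) (hxy : x ≤ inv y) :
    g x ≤ y := by
  rcases le_or_gt y 0 with hy | hy
  · rw [hinv0 y hy] at hxy
    linarith
  · obtain ⟨hinv_nonneg, hg_inv⟩ := hinv y hy.le
    exact hg_inv ▸ hg.monotoneOn (mem_Ici.2 hx.le) hinv_nonneg hxy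

theorem le_of_extendedInverse_lt (hg : StrictMonoOn g (Ici 0)) (hg0 : g 0 = 0)
    (hinv0 : ∀ y ≤ 0, inv y = 0) (hinv : ∀ y, 0 ≤ y → 0 ≤ inv y ∧ g (inv y) = y) {x y : ℝ}
    (hxy : inv y < x) : y ≤ g x := by
  have hx : 0 ≤ x := (extendedInverse_nonneg hinv0 hinv y).trans hxy.le
  rcases le_or_gt y 0 with hy | hy
  · exact hy.trans (hg0 ▸ hg.monotoneOn self_mem_Ici hx hx)
  · obtain ⟨hinv_nonneg, hg_inv⟩ := hinv y hy.le
    exact hg_inv ▸ hg.monotoneOn hinv_nonneg hx hxy.le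

theorem continuous_extendedInverse (hg : StrictMonoOn g (Ici 0)) (hg0 : g 0 = 0)
    (hinv0 : ∀ y ≤ 0, inv y = 0) (hinv : ∀ y, 0 ≤ y → 0 ≤ inv y ∧ g (inv y) = y) :
    Continuous inv := by
  have hmono : Monotone inv := by
    intro y y' hyy'
    by_contra! hlt
    rcases le_or_gt y 0 with hy | hy
    · rw [hinv0 y hy] at hlt
      exact (extendedInverse_nonneg hinv0 hinv y').not_gt hlt
    · have := le_of_extendedInverse_lt hg hg0 hinv0 hinv hlt
      rw [(hinv y hy.le).2] at this
      rw [le_antisymm hyy' this] at hlt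
      exact lt_irrefl _ hlt
  -- `inv` has range `[0, ∞)`; adding `min y 0` turns it into a monotone surjection of `ℝ`.
  have hsurj : Function.Surjective fun y => inv y + min y 0 := by
    intro x
    rcases le_total x 0 with hx | hx
    · exact ⟨x, by simp [hinv0 x hx, hx]⟩
    · have hgx : 0 ≤ g x := hg0 ▸ hg.monotoneOn self_mem_Ici hx hx
      refine ⟨g x, show inv (g x) + min (g x) 0 = x from ?_⟩
      rw [hg.injOn (hinv (g x) hgx).1 hx (hinv (g x) hgx).2, min_eq_right hgx, add_zero]
  have hcont := (hmono.add (monotone_id.min monotone_const)).continuous_of_surjective hsurj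
  convert hcont.sub (continuous_id.min (continuous_const (y := (0 : ℝ)))) using 1
  ext y
  simp

end ExtendedInverse

theorem hasDerivAt_of_forall_le_add_mul {ψ g : ℝ → ℝ} {y : ℝ}
    (hsup : ∀ x w, ψ w ≤ ψ x + (w - x) * g x) (hg : ContinuousAt g y) :
    HasDerivAt ψ (g y) y := by
  rw [hasDerivAt_iff_isLittleO]
  have hsmall : (fun w => (w - y) * (g w - g y)) =o[𝓝 y] fun w => w - y := by
    have hg' : (fun w => g w - g y) =o[𝓝 y] fun _ => (1 : ℝ) :=
      (isLittleO_one_iff ℝ).2 (by simpa using hg.sub_const (g y))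
    simpa using (isBigO_refl (fun w => w - y) (𝓝 y)).mul_isLittleO hg'
  refine (IsBigO.of_bound' (Eventually.of_forall fun w => ?_)).trans_isLittleO hsmall
  -- The two supergradient inequalities at `y` and at `w` squeeze the remainder between
  -- `(w - y) * (g w - g y)` and `0`.
  have hle := hsup y w
  have hge := hsup w y
  rw [smul_eq_mul, Real.norm_eq_abs, Real.norm_eq_abs, abs_le]
  constructor
  · linarith [neg_abs_le ((w - y) * (g w - g y))]
  · linarith [abs_nonneg ((w - y) * (g w - g y))]

section Legendre

variable {f invPhi : ℝ → ℝ}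

theorem isMinOn_Hfun (hint : ∀ ρ, IntegrableOn (fun s => f s / s) (Ioc 0 ρ))
    (hpos : ∀ s, 0 < s → 0 < f s) (hinv0 : ∀ y ≤ 0, invPhi y = 0)
    (hinv : ∀ y, 0 ≤ y → 0 ≤ invPhi y ∧ PhiD f (invPhi y) = y) (ρ₀ y : ℝ) :
    IsMinOn (Hfun f ρ₀ y) (Ici (-ρ₀)) (invPhi (y + PhiD f ρ₀) - ρ₀) := by
  have hd := hasDerivAt_Hfun hint ρ₀ y
  have hg := strictMonoOn_PhiD_s2 hint hpos
  refine isMinOn_Ici_of_deriv (hd _).continuousAt (hd _).continuousAt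
    (fun x _ => (hd x).differentiableAt.differentiableWithinAt)
    (fun x _ => (hd x).differentiableAt.differentiableWithinAt) (fun x hx => ?_) (fun x hx => ?_)
  · rw [(hd x).deriv, sub_sub, sub_nonpos, add_comm (PhiD f ρ₀)]
    exact le_of_le_extendedInverse hg hinv0 hinv (by linarith [hx.1]) (by linarith [hx.2])
  · rw [(hd x).deriv, sub_sub, sub_nonneg, add_comm (PhiD f ρ₀)]
    exact le_of_extendedInverse_lt hg (PhiD_of_nonpos le_rfl) hinv0 hinv
      (by linarith [mem_Ioi.1 hx])

theorem PsiStar_eq_Hfun (hint : ∀ ρ, IntegrableOn (fun s => f s / s) (Ioc 0 ρ))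
    (hpos : ∀ s, 0 < s → 0 < f s) (hinv0 : ∀ y ≤ 0, invPhi y = 0)
    (hinv : ∀ y, 0 ≤ y → 0 ≤ invPhi y ∧ PhiD f (invPhi y) = y) (ρ₀ y : ℝ) :
    PsiStar f ρ₀ y = Hfun f ρ₀ y (invPhi (y + PhiD f ρ₀) - ρ₀) := by
  have hmem : invPhi (y + PhiD f ρ₀) - ρ₀ ∈ Ici (-ρ₀) := by
    simpa using extendedInverse_nonneg hinv0 hinv (y + PhiD f ρ₀)
  exact IsLeast.csInf_eq
    ⟨mem_image_of_mem _ hmem, forall_mem_image.2 (isMinOn_Hfun hint hpos hinv0 hinv ρ₀ y)⟩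

theorem PsiStar_le_sub_mul (hint : ∀ ρ, IntegrableOn (fun s => f s / s) (Ioc 0 ρ))
    (hpos : ∀ s, 0 < s → 0 < f s) (hinv0 : ∀ y ≤ 0, invPhi y = 0)
    (hinv : ∀ y, 0 ≤ y → 0 ≤ invPhi y ∧ PhiD f (invPhi y) = y) (ρ₀ y w : ℝ) :
    PsiStar f ρ₀ w ≤ PsiStar f ρ₀ y - (w - y) * (invPhi (y + PhiD f ρ₀) - ρ₀) := by
  set z := invPhi (y + PhiD f ρ₀) - ρ₀
  have hmin : PsiStar f ρ₀ w ≤ Hfun f ρ₀ w z := by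
    rw [PsiStar_eq_Hfun hint hpos hinv0 hinv]
    exact isMinOn_Hfun hint hpos hinv0 hinv ρ₀ w
      (by simpa [z] using extendedInverse_nonneg hinv0 hinv (y + PhiD f ρ₀))
  have hshift : Hfun f ρ₀ w z = Hfun f ρ₀ y z - (w - y) * z := by
    simp only [Hfun]
    ring
  rw [PsiStar_eq_Hfun hint hpos hinv0 hinv ρ₀ y]
  linarith

end Legendre

theorem stmt2_general (P' : ℝ → ℝ)
    (hP'cont : ContinuousOn P' (Set.Ioi 0))
    (hP'pos : ∀ s, 0 < s → 0 < P' s)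
    (γ₀ K₀ : ℝ) (hγ₀ : γ₀ ∈ Set.Ioo (6/5 : ℝ) 2)
    (hlim₀ : Filter.Tendsto (fun s => s ^ (1 - γ₀) * P' s) (nhdsWithin 0 (Set.Ioi 0)) (nhds K₀))
    -- `invPhi` is the extended inverse `(Φ')₊⁻¹ : ℝ → [0,∞)`, vanishing on `(-∞,0]`
    (invPhi : ℝ → ℝ)
    (hinv0 : ∀ y ≤ (0:ℝ), invPhi y = 0)
    (hinv : ∀ y, 0 ≤ y → 0 ≤ invPhi y ∧ PhiD P' (invPhi y) = y)
    (ρ₀ : ℝ) :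
    -- `Ψ*_{ρ₀}` is C¹ on ℝ with `(Ψ*_{ρ₀})'(y) = -(Φ')₊⁻¹(y + Φ'(ρ₀)) + ρ₀`
    Continuous (fun y : ℝ => -(invPhi (y + PhiD P' ρ₀)) + ρ₀) ∧
    ∀ y : ℝ, HasDerivAt (PsiStar P' ρ₀) (-(invPhi (y + PhiD P' ρ₀)) + ρ₀) y := by
  have hint := integrableOn_div_Ioc_zero_of_tendsto hP'cont (by linarith [hγ₀.1]) hlim₀
  have hinv_cont : Continuous invPhi :=
    continuous_extendedInverse (strictMonoOn_PhiD_s2 hint hP'pos) (PhiD_of_nonpos le_rfl) hinv0 hinv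
  have hcont : Continuous fun y => -(invPhi (y + PhiD P' ρ₀)) + ρ₀ :=
    (hinv_cont.comp (continuous_add_const _)).neg.add continuous_const
  refine ⟨hcont, fun y => hasDerivAt_of_forall_le_add_mul (fun x w => ?_) hcont.continuousAt⟩
  linarith [PsiStar_le_sub_mul hint hP'pos hinv0 hinv ρ₀ x w]

theorem stmt2 (P P' : ℝ → ℝ)
    (hP : ∀ s, 0 < s → HasDerivAt P (P' s) s)
    (hP'cont : ContinuousOn P' (Set.Ioi 0))
    (hP'pos : ∀ s, 0 < s → 0 < P' s)
    (γ₀ K₀ : ℝ) (hγ₀ : γ₀ ∈ Set.Ioo (6/5 : ℝ) 2) (hK₀ : 0 < K₀)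
    (hlim₀ : Filter.Tendsto (fun s => s ^ (1 - γ₀) * P' s) (nhdsWithin 0 (Set.Ioi 0)) (nhds K₀))
    (γ₁ K₁ : ℝ) (hγ₁ : γ₁ ∈ Set.Ioo (6/5 : ℝ) 2) (hK₁ : 0 < K₁)
    (hlim₁ : Filter.Tendsto (fun s => s ^ (1 - γ₁) * P' s) Filter.atTop (nhds K₁))
    -- `invPhi` is the extended inverse `(Φ')₊⁻¹ : ℝ → [0,∞)`, vanishing on `(-∞,0]`
    (invPhi : ℝ → ℝ)
    (hinv0 : ∀ y ≤ (0:ℝ), invPhi y = 0)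
    (hinv : ∀ y, 0 ≤ y → 0 ≤ invPhi y ∧ PhiD P' (invPhi y) = y)
    (ρ₀ : ℝ) (hρ₀ : 0 ≤ ρ₀) :
    -- `Ψ*_{ρ₀}` is C¹ on ℝ with `(Ψ*_{ρ₀})'(y) = -(Φ')₊⁻¹(y + Φ'(ρ₀)) + ρ₀`
    Continuous (fun y : ℝ => -(invPhi (y + PhiD P' ρ₀)) + ρ₀) ∧
    ∀ y : ℝ, HasDerivAt (PsiStar P' ρ₀) (-(invPhi (y + PhiD P' ρ₀)) + ρ₀) y :=
  stmt2_general P' hP'cont hP'pos γ₀ K₀ hγ₀ hlim₀ invPhi hinv0 hinv ρ₀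
end

section
/- There exist constants N₂ > 0 and C > 0 such that 1/Φ''((Φ')⁻¹(y)) ≤ C y^{(2−γ₁)/(γ₁−1)} for all y > N₂, where (Φ')⁻¹ : [0,∞) → [0,∞) is the inverse of Φ' and Φ''(s) = P'(s)/s. -/
/-!
By (P3), `P'(s) ≥ c s^(γ₁-1)` for `s ≥ s₀`. Integrating `P'(s)/s` over `(ρ/2, ρ]` gives
`Φ'(ρ) ≳ ρ^(γ₁-1)` once `ρ ≥ 2 s₀`, and `Φ'` is monotone, so for `y = Φ'(ρ)` large we get
`ρ ≲ y^(1/(γ₁-1))` and `ρ / P'(ρ) ≲ ρ^(2-γ₁) ≲ y^((2-γ₁)/(γ₁-1))`.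
-/

open MeasureTheory Filter Set

open Topology

theorem integrableOn_Ioc_of_continuousOn_Ioi {E : Type*} [NormedAddCommGroup E] {f : ℝ → E}
    {a c : ℝ} (hf : ContinuousOn f (Ioi a)) (hac : a < c) (hc : IntegrableOn f (Ioc a c))
    (b : ℝ) : IntegrableOn f (Ioc a b) := by
  have hcb : IntegrableOn f (Icc c b) := (hf.mono fun x hx => hac.trans_le hx.1).integrableOn_Icc
  refine (hc.union hcb).mono_set fun x hx => ?_
  rcases le_or_gt x c with hxc | hcx
  · exact Or.inl ⟨hx.1, hxc⟩
  · exact Or.inr ⟨hcx.le, hx.2⟩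

theorem exists_mul_rpow_le_of_tendsto {g : ℝ → ℝ} {γ K : ℝ} (hK : 0 < K)
    (h : Tendsto (fun s => s ^ (1 - γ) * g s) atTop (𝓝 K)) :
    ∃ c > 0, ∃ s₀ > 0, ∀ s ≥ s₀, c * s ^ (γ - 1) ≤ g s := by
  obtain ⟨s₁, hs₁⟩ := eventually_atTop.mp (h.eventually_const_lt (half_lt_self hK))
  refine ⟨K / 2, half_pos hK, max s₁ 1, by positivity, fun s hs => ?_⟩
  have hs0 : 0 < s := one_pos.trans_le (le_of_max_le_right hs)
  have hlt := hs₁ s (le_of_max_le_left hs)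
  rw [← neg_sub, Real.rpow_neg hs0.le, inv_mul_eq_div] at hlt
  exact ((lt_div_iff₀ (by positivity)).mp hlt).le

theorem rpow_two_sub_le_rpow_div {ρ z γ : ℝ} (hρ : 0 ≤ ρ) (hγ : 1 < γ) (hγ2 : γ ≤ 2)
    (h : ρ ^ (γ - 1) ≤ z) : ρ ^ (2 - γ) ≤ z ^ ((2 - γ) / (γ - 1)) := by
  calc ρ ^ (2 - γ) = (ρ ^ (γ - 1)) ^ ((2 - γ) / (γ - 1)) := by
        rw [← Real.rpow_mul hρ, mul_div_cancel₀ _ (sub_pos.mpr hγ).ne']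
    _ ≤ z ^ ((2 - γ) / (γ - 1)) :=
        Real.rpow_le_rpow (by positivity) h (div_nonneg (by linarith) (by linarith))

section PhiD

variable {P' : ℝ → ℝ}

theorem integrableOn_Ioc_zero_of_PhiD_ne_zero (hcont : ContinuousOn P' (Ioi 0)) {a : ℝ}
    (ha : PhiD P' a ≠ 0) (b : ℝ) : IntegrableOn (fun s => P' s / s) (Ioc 0 b) := by
  have hpos : 0 < a := by
    by_contra! h
    exact ha (by simp [PhiD, Ioc_eq_empty_of_le h])
  have hint : IntegrableOn (fun s => P' s / s) (Ioc 0 a) := by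
    by_contra h
    exact ha (integral_undef h)
  exact integrableOn_Ioc_of_continuousOn_Ioi
    (hcont.div continuousOn_id fun s hs => hs.ne') hpos hint b

theorem setIntegral_Ioc_le_PhiD (hP' : ∀ s, 0 < s → 0 ≤ P' s) {a c b : ℝ}
    (hint : IntegrableOn (fun s => P' s / s) (Ioc 0 b)) (ha : 0 ≤ a) (hcb : c ≤ b) :
    ∫ s in Ioc a c, P' s / s ≤ PhiD P' b := by
  refine setIntegral_mono_set hint ?_ (Eventually.of_forall ?_)
  · filter_upwards [ae_restrict_mem measurableSet_Ioc] with s hs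
    exact div_nonneg (hP' s hs.1) hs.1.le
  · exact fun s (hs : s ∈ Ioc a c) => (⟨ha.trans_lt hs.1, hs.2.trans hcb⟩ : s ∈ Ioc 0 b)

theorem PhiD_mono (hP' : ∀ s, 0 < s → 0 ≤ P' s) {a b : ℝ}
    (hint : IntegrableOn (fun s => P' s / s) (Ioc 0 b)) (hab : a ≤ b) : PhiD P' a ≤ PhiD P' b :=
  setIntegral_Ioc_le_PhiD hP' hint le_rfl hab

theorem mul_rpow_le_PhiD (hP' : ∀ s, 0 < s → 0 ≤ P' s) {c β s₀ ρ : ℝ} (hc : 0 ≤ c)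
    (hβ : 0 ≤ β) (hs₀ : 0 < s₀) (hlow : ∀ s ≥ s₀, c * s ^ β ≤ P' s)
    (hint : IntegrableOn (fun s => P' s / s) (Ioc 0 ρ)) (hρ : 2 * s₀ ≤ ρ) :
    c / 2 ^ (β + 1) * ρ ^ β ≤ PhiD P' ρ := by
  have hρ0 : 0 < ρ := by linarith
  have hbound : ∀ s ∈ Ioc (ρ / 2) ρ, c * (ρ / 2) ^ β / ρ ≤ P' s / s := by
    intro s hs
    have hs0 : 0 < s := lt_of_le_of_lt (by positivity) hs.1
    calc c * (ρ / 2) ^ β / ρ ≤ c * s ^ β / s := by gcongr <;> linarith [hs.1, hs.2]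
      _ ≤ P' s / s := by gcongr; exact hlow s (by linarith [hs.1])
  calc c / 2 ^ (β + 1) * ρ ^ β = ∫ _ in Ioc (ρ / 2) ρ, c * (ρ / 2) ^ β / ρ := by
        rw [setIntegral_const, Real.volume_real_Ioc_of_le (by linarith), smul_eq_mul,
          Real.div_rpow hρ0.le zero_le_two, Real.rpow_add_one two_ne_zero]
        field_simp
        ring
    _ ≤ ∫ s in Ioc (ρ / 2) ρ, P' s / s :=
        setIntegral_mono_on (integrableOn_const measure_Ioc_lt_top.ne)
          (hint.mono_set (Ioc_subset_Ioc_left (by positivity))) measurableSet_Ioc hbound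
    _ ≤ PhiD P' ρ := setIntegral_Ioc_le_PhiD hP' hint (by positivity) le_rfl

end PhiD

theorem stmt13_general (P' : ℝ → ℝ)
    (hP'cont : ContinuousOn P' (Set.Ioi 0))
    (hP'pos : ∀ s, 0 < s → 0 < P' s)
    (γ₁ K₁ : ℝ) (hγ₁ : γ₁ ∈ Set.Ioo (6/5 : ℝ) 2) (hK₁ : 0 < K₁)
    (hlim₁ : Filter.Tendsto (fun s => s ^ (1 - γ₁) * P' s) Filter.atTop (nhds K₁))
    -- `invPhi` is the inverse `(Φ')⁻¹ : [0,∞) → [0,∞)` of `Φ'`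
    (invPhi : ℝ → ℝ)
    (hinv : ∀ y, 0 ≤ y → 0 ≤ invPhi y ∧ PhiD P' (invPhi y) = y) :
    -- `1/Φ''((Φ')⁻¹(y)) = (Φ')⁻¹(y) / P'((Φ')⁻¹(y)) ≤ C y^((2-γ₁)/(γ₁-1))` for `y > N₂`
    ∃ N₂ > (0:ℝ), ∃ C > (0:ℝ), ∀ y : ℝ, N₂ < y →
      1 / (P' (invPhi y) / invPhi y) ≤ C * y ^ ((2 - γ₁) / (γ₁ - 1)) := by
  obtain ⟨hγ₁l, hγ₁u⟩ := hγ₁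
  have hP'nonneg : ∀ s, 0 < s → 0 ≤ P' s := fun s hs => (hP'pos s hs).le
  -- `Φ'` takes the value `1`, so the integral defining it converges
  have hint := integrableOn_Ioc_zero_of_PhiD_ne_zero hP'cont
    ((hinv 1 zero_le_one).2.symm ▸ one_ne_zero)
  obtain ⟨c, hc, s₀, hs₀, hlow⟩ := exists_mul_rpow_le_of_tendsto hK₁ hlim₁
  set c' := c / 2 ^ (γ₁ - 1 + 1)
  refine ⟨max (PhiD P' (2 * s₀)) 1, by positivity,
    (1 / c') ^ ((2 - γ₁) / (γ₁ - 1)) / c, by positivity, fun y hy => ?_⟩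
  have hy0 : 0 < y := by linarith [le_max_right (PhiD P' (2 * s₀)) 1]
  obtain ⟨hρ0, hρy⟩ := hinv y hy0.le
  set ρ := invPhi y
  have hρ : 2 * s₀ ≤ ρ := by
    by_contra! h
    linarith [PhiD_mono hP'nonneg (hint _) h.le, le_max_left (PhiD P' (2 * s₀)) 1]
  have hρpos : 0 < ρ := by linarith
  have hρy' : ρ ^ (γ₁ - 1) ≤ 1 / c' * y := by
    rw [← hρy, div_mul_eq_mul_div, one_mul, le_div_iff₀ (by positivity), mul_comm]
    exact mul_rpow_le_PhiD hP'nonneg hc.le (by linarith) hs₀ hlow (hint ρ) hρ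
  calc 1 / (P' ρ / ρ) = ρ / P' ρ := one_div_div _ _
    _ ≤ ρ / (c * ρ ^ (γ₁ - 1)) := by gcongr; exact hlow ρ (by linarith)
    _ = ρ ^ (2 - γ₁) / c := by
        rw [div_eq_div_iff (by positivity) hc.ne', mul_comm c, ← mul_assoc,
          ← Real.rpow_add hρpos, show 2 - γ₁ + (γ₁ - 1) = 1 by ring, Real.rpow_one]
    _ ≤ (1 / c' * y) ^ ((2 - γ₁) / (γ₁ - 1)) / c := by
        gcongr; exact rpow_two_sub_le_rpow_div hρ0 (by linarith) hγ₁u.le hρy'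
    _ = (1 / c') ^ ((2 - γ₁) / (γ₁ - 1)) / c * y ^ ((2 - γ₁) / (γ₁ - 1)) := by
        rw [Real.mul_rpow (by positivity) hy0.le]; ring

theorem stmt13 (P P' : ℝ → ℝ)
    (hP : ∀ s, 0 < s → HasDerivAt P (P' s) s)
    (hP'cont : ContinuousOn P' (Set.Ioi 0))
    (hP'pos : ∀ s, 0 < s → 0 < P' s)
    (γ₀ K₀ : ℝ) (hγ₀ : γ₀ ∈ Set.Ioo (6/5 : ℝ) 2) (hK₀ : 0 < K₀)
    (hlim₀ : Filter.Tendsto (fun s => s ^ (1 - γ₀) * P' s) (nhdsWithin 0 (Set.Ioi 0)) (nhds K₀))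
    (γ₁ K₁ : ℝ) (hγ₁ : γ₁ ∈ Set.Ioo (6/5 : ℝ) 2) (hK₁ : 0 < K₁)
    (hlim₁ : Filter.Tendsto (fun s => s ^ (1 - γ₁) * P' s) Filter.atTop (nhds K₁))
    -- `invPhi` is the inverse `(Φ')⁻¹ : [0,∞) → [0,∞)` of `Φ'`
    (invPhi : ℝ → ℝ)
    (hinv : ∀ y, 0 ≤ y → 0 ≤ invPhi y ∧ PhiD P' (invPhi y) = y) :
    -- `1/Φ''((Φ')⁻¹(y)) = (Φ')⁻¹(y) / P'((Φ')⁻¹(y)) ≤ C y^((2-γ₁)/(γ₁-1))` for `y > N₂`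
    ∃ N₂ > (0:ℝ), ∃ C > (0:ℝ), ∀ y : ℝ, N₂ < y →
      1 / (P' (invPhi y) / invPhi y) ≤ C * y ^ ((2 - γ₁) / (γ₁ - 1)) :=
  stmt13_general P' hP'cont hP'pos γ₁ K₁ hγ₁ hK₁ hlim₁ invPhi hinv
end
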